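/- arXiv:2506.22014 — 3 statements merged into one kernel-verified Lean document; each statement's English description precedes it below -/
import Mathlib

section
/- Define the non-central Stirling numbers of the second kind S_α(n,k) by the recurrence S_α(n+1,k) = S_α(n,k-1) + (k-α) S_α(n,k), with S_α(n,0) = (-α)^n for n ≥ 0 and S_α(0,k) = 0 for k ≥ 1. Then for α = -1/2 one has S_{-1/2}(N,k) = 2^{-N} ∑_{n=k}^{N} (N choose n) 2^n S(n,k), where S(n,k) are the ordinary Stirling numbers of the second kind. -/
/-- Ordinary Stirling numbers of the second kind (as rationals). -/
def stirling2 : ℕ → ℕ → ℚ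
  | 0, 0 => 1
  | 0, _ + 1 => 0
  | _ + 1, 0 => 0
  | n + 1, k + 1 => stirling2 n k + (k + 1 : ℚ) * stirling2 n (k + 1)

/-- Non-central Stirling numbers of the second kind with parameter `α`. -/
def Snc (α : ℚ) : ℕ → ℕ → ℚ
  | 0, 0 => 1
  | 0, _ + 1 => 0
  | n + 1, 0 => (-α) ^ (n + 1)
  | n + 1, k + 1 => Snc α n k + ((k + 1 : ℚ) - α) * Snc α n (k + 1)

lemma stirling2_eq_zero : ∀ n k : ℕ, n < k → stirling2 n k = 0
  | 0, _ + 1, _ => rfl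
  | n + 1, k + 1, h => by
      have h1 : n < k := Nat.lt_of_succ_lt_succ h
      have h2 : n < k + 1 := h1.trans (Nat.lt_succ_self k)
      simp [stirling2, stirling2_eq_zero n k h1, stirling2_eq_zero n (k + 1) h2]

lemma key : ∀ N k : ℕ, (2:ℚ)^N * Snc (-1/2) N k
    = ∑ n ∈ Finset.range (N+1), (N.choose n : ℚ) * 2^n * stirling2 n k := by
  intro N
  induction N with
  | zero =>
    intro k
    cases k with
    | zero => simp [Snc, stirling2]
    | succ k => simp [Snc, stirling2]
  | succ N ih =>
    intro k
    cases k with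
    | zero =>
      rw [Finset.sum_range_succ']
      have : ∀ i ∈ Finset.range (N+1),
          (((N+1).choose (i+1) : ℚ)) * 2^(i+1) * stirling2 (i+1) 0 = 0 := by
        intro i _; simp [stirling2]
      rw [Finset.sum_congr rfl this]
      simp only [Finset.sum_const_zero, Nat.choose_zero_right, pow_zero]
      show (2:ℚ)^(N+1) * (-(-1/2))^(N+1) = 0 + 1 * 1 * stirling2 0 0
      rw [← mul_pow]
      norm_num [stirling2]
    | succ k =>
      have expand : ∀ i ∈ Finset.range (N+1),
          (((N+1).choose (i+1) : ℚ)) * 2^(i+1) * stirling2 (i+1) (k+1)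
          = 2 * ((N.choose i : ℚ) * 2^i * stirling2 i k)
            + (2*(k:ℚ)+2) * ((N.choose i : ℚ) * 2^i * stirling2 i (k+1))
            + ((N.choose (i+1) : ℚ) * 2^(i+1) * stirling2 (i+1) (k+1)) := by
        intro i _
        rw [Nat.choose_succ_succ]
        push_cast
        show _ * _ * stirling2 (i+1) (k+1) = _
        rw [show stirling2 (i+1) (k+1) = stirling2 i k + (k+1 : ℚ) * stirling2 i (k+1) from rfl]
        ring
      have shift : ∑ i ∈ Finset.range (N+1),
            ((N.choose (i+1) : ℚ) * 2^(i+1) * stirling2 (i+1) (k+1))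
          = ∑ n ∈ Finset.range (N+1), (N.choose n : ℚ) * 2^n * stirling2 n (k+1) := by
        have h0 : ∑ n ∈ Finset.range (N+2), (N.choose n : ℚ) * 2^n * stirling2 n (k+1)
            = ∑ i ∈ Finset.range (N+1), ((N.choose (i+1) : ℚ) * 2^(i+1) * stirling2 (i+1) (k+1))
              + (N.choose 0 : ℚ) * 2^0 * stirling2 0 (k+1) :=
          Finset.sum_range_succ' _ _
        have h1 : ∑ n ∈ Finset.range (N+2), (N.choose n : ℚ) * 2^n * stirling2 n (k+1)
            = ∑ n ∈ Finset.range (N+1), (N.choose n : ℚ) * 2^n * stirling2 n (k+1)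
              + (N.choose (N+1) : ℚ) * 2^(N+1) * stirling2 (N+1) (k+1) :=
          Finset.sum_range_succ _ _
        rw [h1] at h0
        rw [Nat.choose_eq_zero_of_lt (Nat.lt_succ_self N),
          show stirling2 0 (k+1) = 0 from rfl] at h0
        norm_num at h0
        linarith
      rw [Finset.sum_range_succ', Finset.sum_congr rfl expand]
      rw [Finset.sum_add_distrib, Finset.sum_add_distrib, ← Finset.mul_sum, ← Finset.mul_sum,
        shift]
      rw [← ih k, ← ih (k+1)]
      show (2:ℚ)^(N+1) * (Snc (-1/2) N k + ((k+1 : ℚ) - (-1/2)) * Snc (-1/2) N (k+1)) = _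
      rw [show stirling2 0 (k+1) = 0 from rfl]
      push_cast
      ring

theorem stmt_2 (N k : ℕ) :
    Snc (-1/2) N k =
      ((2 : ℚ) ^ N)⁻¹ * ∑ n ∈ Finset.Icc k N, (N.choose n : ℚ) * 2 ^ n * stirling2 n k := by
  have hsum : ∑ n ∈ Finset.Icc k N, (N.choose n : ℚ) * 2 ^ n * stirling2 n k
      = ∑ n ∈ Finset.range (N+1), (N.choose n : ℚ) * 2 ^ n * stirling2 n k := by
    apply Finset.sum_subset
    · intro n hn
      simp only [Finset.mem_Icc] at hn
      exact Finset.mem_range.2 (Nat.lt_succ_of_le hn.2)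
    · intro n hn hn'
      simp only [Finset.mem_range, Finset.mem_Icc, not_and, not_le] at hn hn'
      rcases le_or_gt k n with h | h
      · exact absurd (hn' h) (by omega)
      · rw [stirling2_eq_zero n k h, mul_zero]
  rw [hsum, ← key N k, inv_mul_cancel_left₀ (by positivity)]
end

section
/- Let χ be a non-principal Dirichlet character modulo q, f_χ(x) = ∑_{n≥1} χ(n) e^{-nx}, and A_χ(v) = ∫_0^∞ f_χ(xv) f_{χ̄}(x) dx for v > 0. Then for 0 < Re(s) < 1 (it suffices to establish the identity for real s in (0,1)), the Mellin transform satisfies ∫_0^∞ A_χ(v) v^{s-1} dv = Γ(s) L(s,χ) Γ(1-s) L(1-s, χ̄). -/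
set_option maxHeartbeats 1000000


open Real Complex

/-- `f_χ(x) = ∑_{n≥1} χ(n) e^{-nx}`. -/
noncomputable def fchi {q : ℕ} (χ : DirichletCharacter ℂ q) (x : ℝ) : ℂ :=
  ∑' n : ℕ, χ ((n + 1 : ℕ) : ZMod q) * Complex.exp (-((n + 1 : ℕ) : ℝ) * x)

/-- The auto-correlation function `A_χ`. -/
noncomputable def Achi {q : ℕ} (χ : DirichletCharacter ℂ q) (v : ℝ) : ℂ :=
  ∫ x in Set.Ioi (0 : ℝ), fchi χ (x * v) * fchi (χ.ringHomComp (starRingEnd ℂ)) x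


open MeasureTheory Set Filter Topology Asymptotics

namespace StmtAux

variable {q : ℕ} [NeZero q]

noncomputable def S (χ : DirichletCharacter ℂ q) (n : ℕ) : ℂ :=
  ∑ k ∈ Finset.range n, χ ((k + 1 : ℕ) : ZMod q)

lemma sum_range_q (χ : DirichletCharacter ℂ q) (hχ : χ ≠ 1) (c : ℕ) :
    ∑ k ∈ Finset.range q, χ ((c + k : ℕ) : ZMod q) = 0 := by
  have h1 : ∑ k ∈ Finset.range q, χ ((c + k : ℕ) : ZMod q)
      = ∑ a : ZMod q, χ ((c : ZMod q) + a) := by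
    refine Finset.sum_nbij' (fun k ↦ (k : ZMod q)) (fun a ↦ a.val) ?_ ?_ ?_ ?_ ?_
    · intro k hk; exact Finset.mem_univ _
    · intro a _; exact Finset.mem_range.mpr (ZMod.val_lt a)
    · intro k hk; exact ZMod.val_natCast_of_lt (Finset.mem_range.mp hk)
    · intro a _; exact ZMod.natCast_rightInverse a
    · intro k hk; push_cast; ring_nf
  rw [h1]
  have h2 := Fintype.sum_equiv (Equiv.addLeft ((c : ZMod q)))
    (fun a ↦ χ ((c : ZMod q) + a)) (fun a ↦ χ a) (fun a ↦ rfl)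
  exact h2.trans (MulChar.sum_eq_zero_of_ne_one hχ)

lemma S_add_q (χ : DirichletCharacter ℂ q) (hχ : χ ≠ 1) (n : ℕ) :
    S χ (n + q) = S χ n := by
  have : S χ (n + q) = S χ n + ∑ k ∈ Finset.range q, χ ((n + 1 + k : ℕ) : ZMod q) := by
    rw [S, Finset.sum_range_add, S]
    congr 1
    refine Finset.sum_congr rfl fun k _ ↦ by ring_nf
  rw [this, sum_range_q χ hχ, add_zero]

lemma norm_S_le (χ : DirichletCharacter ℂ q) (hχ : χ ≠ 1) (n : ℕ) :
    ‖S χ n‖ ≤ q := by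
  induction n using Nat.strong_induction_on with
  | _ n ih =>
    rcases lt_or_ge n q with h | h
    · calc ‖S χ n‖ ≤ ∑ k ∈ Finset.range n, ‖χ ((k + 1 : ℕ) : ZMod q)‖ := norm_sum_le _ _
        _ ≤ ∑ _k ∈ Finset.range n, (1 : ℝ) := by
            exact Finset.sum_le_sum fun k _ ↦ DirichletCharacter.norm_le_one χ _
        _ = n := by simp
        _ ≤ q := by exact_mod_cast h.le
    · have hq : 0 < q := Nat.pos_of_ne_zero (NeZero.ne q)
      have h2 : n - q + q = n := Nat.sub_add_cancel h
      have := S_add_q χ hχ (n - q)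
      rw [h2] at this
      calc ‖S χ n‖ = ‖S χ (n - q)‖ := by rw [← this]
        _ ≤ q := ih _ (by omega)

end StmtAux

namespace StmtAux2

open StmtAux

variable {q : ℕ} [NeZero q]

lemma term_eq (χ : DirichletCharacter ℂ q) (n : ℕ) (x : ℝ) :
    χ ((n + 1 : ℕ) : ZMod q) * Complex.exp (-((n + 1 : ℕ) : ℝ) * x)
      = χ ((n + 1 : ℕ) : ZMod q) * ((rexp (-x) : ℝ) : ℂ) ^ (n + 1) := by
  congr 1
  rw [← Complex.ofReal_pow, ← Real.exp_nat_mul, Complex.ofReal_exp]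
  push_cast
  ring_nf

lemma summable_geo {x : ℝ} (hx : 0 < x) : Summable (fun n : ℕ ↦ rexp (-x) ^ (n + 1)) := by
  have h := summable_geometric_of_lt_one (Real.exp_nonneg _)
    (Real.exp_lt_one_iff.mpr (neg_lt_zero.mpr hx))
  simpa [pow_succ, mul_comm] using h.mul_left (rexp (-x))

lemma norm_term_le (χ : DirichletCharacter ℂ q) (n : ℕ) (x : ℝ) :
    ‖χ ((n + 1 : ℕ) : ZMod q) * Complex.exp (-((n + 1 : ℕ) : ℝ) * x)‖
      ≤ rexp (-x) ^ (n + 1) := by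
  rw [term_eq, norm_mul, norm_pow, Complex.norm_real, Real.norm_eq_abs,
    abs_of_pos (Real.exp_pos _)]
  calc ‖χ ((n + 1 : ℕ) : ZMod q)‖ * rexp (-x) ^ (n + 1)
      ≤ 1 * rexp (-x) ^ (n + 1) := by
        exact mul_le_mul_of_nonneg_right (DirichletCharacter.norm_le_one χ _) (by positivity)
    _ = rexp (-x) ^ (n + 1) := one_mul _

lemma summable_term (χ : DirichletCharacter ℂ q) {x : ℝ} (hx : 0 < x) :
    Summable (fun n : ℕ ↦ χ ((n + 1 : ℕ) : ZMod q) * Complex.exp (-((n + 1 : ℕ) : ℝ) * x)) :=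
  Summable.of_norm_bounded (summable_geo hx) (fun n ↦ norm_term_le χ n x)

lemma hasSum_fchi (χ : DirichletCharacter ℂ q) {x : ℝ} (hx : 0 < x) :
    HasSum (fun n : ℕ ↦ χ ((n + 1 : ℕ) : ZMod q) * Complex.exp (-((n + 1 : ℕ) : ℝ) * x))
      (fchi χ x) :=
  (summable_term χ hx).hasSum

lemma fchi_eq_abel (χ : DirichletCharacter ℂ q) (hχ : χ ≠ 1) {x : ℝ} (hx : 0 < x) :
    fchi χ x = ∑' n : ℕ, S χ (n + 1) *
      (((rexp (-x) : ℝ) : ℂ) ^ (n + 1) - ((rexp (-x) : ℝ) : ℂ) ^ (n + 2)) := by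
  set z : ℂ := ((rexp (-x) : ℝ) : ℂ) with hz
  have hzn : ‖z‖ = rexp (-x) := by
    rw [hz, Complex.norm_real, Real.norm_eq_abs, abs_of_pos (Real.exp_pos _)]
  have hgeo : Summable (fun n : ℕ ↦ (q : ℝ) * rexp (-x) ^ (n + 1)) :=
    (summable_geo hx).mul_left _
  have hb : Summable (fun n : ℕ ↦ S χ (n + 1) * z ^ (n + 1)) := by
    refine Summable.of_norm_bounded hgeo (fun n ↦ ?_)
    rw [norm_mul, norm_pow, hzn]
    exact mul_le_mul_of_nonneg_right (norm_S_le χ hχ _) (by positivity)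
  have hc : Summable (fun n : ℕ ↦ S χ n * z ^ (n + 1)) := by
    refine Summable.of_norm_bounded hgeo (fun n ↦ ?_)
    rw [norm_mul, norm_pow, hzn]
    exact mul_le_mul_of_nonneg_right (norm_S_le χ hχ _) (by positivity)
  have hterm : ∀ n : ℕ, χ ((n + 1 : ℕ) : ZMod q) * Complex.exp (-((n + 1 : ℕ) : ℝ) * x)
      = S χ (n + 1) * z ^ (n + 1) - S χ n * z ^ (n + 1) := by
    intro n
    rw [term_eq, ← hz]
    have : S χ (n + 1) = S χ n + χ ((n + 1 : ℕ) : ZMod q) := by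
      rw [S, Finset.sum_range_succ]; rfl
    rw [this]; ring
  have hc' : Summable (fun n : ℕ ↦ S χ (n + 1) * z ^ (n + 2)) := by
    have := (summable_nat_add_iff 1).mpr hc
    simpa using this
  have hfchi : fchi χ x = ∑' n : ℕ, (S χ (n + 1) * z ^ (n + 1) - S χ n * z ^ (n + 1)) := by
    rw [fchi]
    exact tsum_congr hterm
  rw [hfchi, Summable.tsum_sub hb hc]
  have hshift : ∑' n : ℕ, S χ n * z ^ (n + 1) = ∑' n : ℕ, S χ (n + 1) * z ^ (n + 2) := by
    rw [Summable.tsum_eq_zero_add hc]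
    simp [S]
  rw [hshift, ← Summable.tsum_sub hb hc']
  exact tsum_congr fun n ↦ by ring

lemma norm_fchi_le (χ : DirichletCharacter ℂ q) (hχ : χ ≠ 1) {x : ℝ} (hx : 0 < x) :
    ‖fchi χ x‖ ≤ (q : ℝ) * rexp (-x) := by
  set r : ℝ := rexp (-x) with hr
  have hr0 : 0 < r := Real.exp_pos _
  have hr1 : r < 1 := Real.exp_lt_one_iff.mpr (neg_lt_zero.mpr hx)
  have hgeo : Summable (fun n : ℕ ↦ r ^ n) := summable_geometric_of_lt_one hr0.le hr1
  have hdiff : Summable (fun n : ℕ ↦ (q : ℝ) * (r ^ (n + 1) - r ^ (n + 2))) := by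
    have h1 : Summable (fun n : ℕ ↦ r ^ (n + 1)) := summable_geo hx
    have h2 : Summable (fun n : ℕ ↦ r ^ (n + 2)) := by
      have := (summable_nat_add_iff 1).mpr h1
      simpa using this
    exact (h1.sub h2).mul_left _
  have hbound : ∀ n : ℕ, ‖S χ (n + 1) *
      (((r : ℝ) : ℂ) ^ (n + 1) - ((r : ℝ) : ℂ) ^ (n + 2))‖
        ≤ (q : ℝ) * (r ^ (n + 1) - r ^ (n + 2)) := by
    intro n
    rw [norm_mul]
    have h1 : (((r : ℝ) : ℂ) ^ (n + 1) - ((r : ℝ) : ℂ) ^ (n + 2))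
        = (((r ^ (n + 1) - r ^ (n + 2) : ℝ)) : ℂ) := by push_cast; ring
    have h2 : 0 ≤ r ^ (n + 1) - r ^ (n + 2) := by
      have : r ^ (n + 2) ≤ r ^ (n + 1) := pow_le_pow_of_le_one hr0.le hr1.le (by omega)
      linarith
    rw [h1, Complex.norm_real, Real.norm_eq_abs, _root_.abs_of_nonneg h2]
    exact mul_le_mul_of_nonneg_right (norm_S_le χ hχ _) h2
  calc ‖fchi χ x‖ ≤ ∑' n : ℕ, (q : ℝ) * (r ^ (n + 1) - r ^ (n + 2)) := by
        rw [fchi_eq_abel χ hχ hx]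
        have hsn : Summable (fun n : ℕ ↦ ‖S χ (n + 1) *
            (((rexp (-x) : ℝ) : ℂ) ^ (n + 1) - ((rexp (-x) : ℝ) : ℂ) ^ (n + 2))‖) :=
          Summable.of_nonneg_of_le (fun n ↦ norm_nonneg _) hbound hdiff
        exact (norm_tsum_le_tsum_norm hsn).trans (Summable.tsum_le_tsum hbound hsn hdiff)
    _ = (q : ℝ) * r := by
        rw [tsum_mul_left]
        congr 1
        have h1 : Summable (fun n : ℕ ↦ r ^ (n + 1)) := summable_geo hx
        have h2 : Summable (fun n : ℕ ↦ r ^ (n + 2)) := by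
          have := (summable_nat_add_iff 1).mpr h1; simpa using this
        rw [Summable.tsum_sub h1 h2]
        have e1 : ∑' n : ℕ, r ^ (n + 1) = r * (1 - r)⁻¹ := by
          simp_rw [pow_succ, mul_comm (r ^ _) r]
          rw [tsum_mul_left, tsum_geometric_of_lt_one hr0.le hr1]
        have e2 : ∑' n : ℕ, r ^ (n + 2) = r ^ 2 * (1 - r)⁻¹ := by
          simp_rw [pow_add, mul_comm (r ^ _) (r ^ 2)]
          rw [tsum_mul_left, tsum_geometric_of_lt_one hr0.le hr1]
        rw [e1, e2]
        have : (1 : ℝ) - r ≠ 0 := by linarith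
        field_simp
end StmtAux2

namespace StmtAux3

open StmtAux StmtAux2

variable {q : ℕ} [NeZero q]

lemma continuousOn_fchi (χ : DirichletCharacter ℂ q) : ContinuousOn (fchi χ) (Ioi 0) := by
  intro x₀ hx₀
  have hx₀' : (0 : ℝ) < x₀ := hx₀
  have hx2 : (0 : ℝ) < x₀ / 2 := by linarith
  have hcont : ContinuousOn (fchi χ) (Ioi (x₀ / 2)) := by
    show ContinuousOn (fun x : ℝ ↦ ∑' n : ℕ, χ ((n + 1 : ℕ) : ZMod q) *
      Complex.exp (-((n + 1 : ℕ) : ℝ) * x)) (Ioi (x₀ / 2))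
    refine continuousOn_tsum (f := fun (n : ℕ) (x : ℝ) ↦ χ ((n + 1 : ℕ) : ZMod q) *
        Complex.exp (-((n + 1 : ℕ) : ℝ) * x)) (fun n ↦ ?_) (summable_geo hx2)
      (fun n x hx ↦ ?_)
    · exact (continuous_const.mul (Complex.continuous_exp.comp
        (by continuity))).continuousOn
    · refine (norm_term_le χ n x).trans ?_
      exact pow_le_pow_left₀ (Real.exp_pos _).le
        (Real.exp_le_exp.mpr (by have := mem_Ioi.mp hx; linarith)) _
  exact (hcont.continuousAt (isOpen_Ioi.mem_nhds (by simp only [mem_Ioi]; linarith))).continuousWithinAt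

lemma locInt_fchi (χ : DirichletCharacter ℂ q) : LocallyIntegrableOn (fchi χ) (Ioi 0) :=
  (continuousOn_fchi χ).locallyIntegrableOn measurableSet_Ioi

lemma isBigO_atTop_fchi (χ : DirichletCharacter ℂ q) (hχ : χ ≠ 1) :
    fchi χ =O[atTop] fun t ↦ rexp (-1 * t) := by
  refine Asymptotics.IsBigO.of_bound q ?_
  filter_upwards [eventually_gt_atTop (0 : ℝ)] with t ht
  rw [Real.norm_eq_abs, abs_of_pos (Real.exp_pos _), neg_one_mul]
  exact norm_fchi_le χ hχ ht

lemma isBigO_zero_fchi (χ : DirichletCharacter ℂ q) (hχ : χ ≠ 1) :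
    fchi χ =O[𝓝[>] (0:ℝ)] (· ^ (-(0:ℝ) : ℝ)) := by
  refine Asymptotics.IsBigO.of_bound q ?_
  filter_upwards [self_mem_nhdsWithin] with t ht
  have ht' : (0:ℝ) < t := ht
  rw [neg_zero, Real.rpow_zero, norm_one, mul_one]
  calc ‖fchi χ t‖ ≤ (q : ℝ) * rexp (-t) := norm_fchi_le χ hχ ht'
    _ ≤ (q : ℝ) * 1 := by
        gcongr
        exact Real.exp_le_one_iff.mpr (by linarith)
    _ = q := mul_one _

lemma mellin_fchi_of_one_lt (χ : DirichletCharacter ℂ q) {z : ℂ} (hz : 1 < z.re) :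
    mellin (fchi χ) z = Complex.Gamma z * DirichletCharacter.LFunction χ z := by
  have h0 : 0 < z.re := lt_trans one_pos hz
  have hΓ : Complex.Gamma z ≠ 0 := by
    refine Complex.Gamma_ne_zero fun m ↦ ?_
    intro h
    rw [h] at h0
    simp only [Complex.neg_re, Complex.natCast_re] at h0
    have : (0:ℝ) ≤ m := Nat.cast_nonneg m
    linarith
  have hF : ∀ t ∈ Ioi (0:ℝ), HasSum
      (fun n : ℕ ↦ χ ((n + 1 : ℕ) : ZMod q) * ((rexp (-((n + 1 : ℕ) : ℝ) * t) : ℝ) : ℂ))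
      (fchi χ t) := by
    intro t ht
    have h := hasSum_fchi χ (mem_Ioi.mp ht)
    refine h.congr_fun fun n ↦ ?_
    rw [Complex.ofReal_exp]
    push_cast
    ring_nf
  have h_sum : Summable fun n : ℕ ↦ ‖χ ((n + 1 : ℕ) : ZMod q)‖ / ((n + 1 : ℕ) : ℝ) ^ z.re := by
    have hs : Summable fun n : ℕ ↦ 1 / ((n + 1 : ℕ) : ℝ) ^ z.re := by
      have := Real.summable_one_div_nat_rpow.mpr hz
      exact (summable_nat_add_iff 1).mpr (by exact_mod_cast this)
    refine Summable.of_nonneg_of_le (fun n ↦ by positivity) (fun n ↦ ?_) hs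
    gcongr
    · exact DirichletCharacter.norm_le_one χ _
  have hmain := hasSum_mellin (F := fchi χ) (a := fun n : ℕ ↦ χ ((n + 1 : ℕ) : ZMod q))
    (p := fun n : ℕ ↦ ((n + 1 : ℕ) : ℝ)) (fun n ↦ Or.inr (by positivity)) h0 hF h_sum
  have hmel : mellin (fchi χ) z
      = ∑' n : ℕ, Complex.Gamma z * χ ((n + 1 : ℕ) : ZMod q) / ((n + 1 : ℕ) : ℂ) ^ z := by
    rw [← hmain.tsum_eq]
    refine tsum_congr fun n ↦ ?_
    norm_cast
  have hterm : ∀ n : ℕ, LSeries.term (fun m : ℕ ↦ χ (m : ZMod q)) z (n + 1)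
      = χ ((n + 1 : ℕ) : ZMod q) / ((n + 1 : ℕ) : ℂ) ^ z := by
    intro n
    rw [LSeries.term_of_ne_zero (Nat.succ_ne_zero n)]
  have hsum1 : Summable fun n : ℕ ↦ LSeries.term (fun m : ℕ ↦ χ (m : ZMod q)) z (n + 1) := by
    have : Summable fun n : ℕ ↦ χ ((n + 1 : ℕ) : ZMod q) / ((n + 1 : ℕ) : ℂ) ^ z := by
      have h2 := (hmain.summable.mul_left (Complex.Gamma z)⁻¹)
      refine h2.congr fun n ↦ ?_
      field_simp
      norm_cast
    exact this.congr fun n ↦ (hterm n).symm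
  have hsummable : Summable fun n : ℕ ↦ LSeries.term (fun m : ℕ ↦ χ (m : ZMod q)) z n :=
    (summable_nat_add_iff 1).mp hsum1
  rw [DirichletCharacter.LFunction_eq_LSeries χ hz, LSeries, hmel, Summable.tsum_eq_zero_add hsummable,
    LSeries.term_zero, zero_add, ← tsum_mul_left]
  exact tsum_congr fun n ↦ by rw [hterm n]; ring

lemma mellin_fchi (χ : DirichletCharacter ℂ q) (hχ : χ ≠ 1) {z : ℂ} (hz : 0 < z.re) :
    mellin (fchi χ) z = Complex.Gamma z * DirichletCharacter.LFunction χ z := by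
  set U : Set ℂ := {w | 0 < w.re} with hU
  have hUo : IsOpen U := isOpen_lt continuous_const Complex.continuous_re
  have hUc : IsPreconnected U := (convex_halfSpace_re_gt (0:ℝ)).isPreconnected
  have hd1 : DifferentiableOn ℂ (mellin (fchi χ)) U := by
    intro w hw
    exact (mellin_differentiableAt_of_isBigO_rpow_exp one_pos (locInt_fchi χ)
      (isBigO_atTop_fchi χ hχ) (isBigO_zero_fchi χ hχ) hw).differentiableWithinAt
  have hd2 : DifferentiableOn ℂ
      (fun w ↦ Complex.Gamma w * DirichletCharacter.LFunction χ w) U := by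
    intro w hw
    refine ((Complex.differentiableAt_Gamma w fun m ↦ ?_).mul
      ((DirichletCharacter.differentiable_LFunction hχ) w)).differentiableWithinAt
    intro h
    have hw' : 0 < w.re := hw
    rw [h] at hw'
    simp only [Complex.neg_re, Complex.natCast_re] at hw'
    have : (0:ℝ) ≤ m := Nat.cast_nonneg m
    linarith
  have h2U : (2 : ℂ) ∈ U := by simp [hU]
  have hev : mellin (fchi χ) =ᶠ[𝓝 (2:ℂ)]
      fun w ↦ Complex.Gamma w * DirichletCharacter.LFunction χ w := by
    have hmem : {w : ℂ | 1 < w.re} ∈ 𝓝 (2:ℂ) :=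
      (isOpen_lt continuous_const Complex.continuous_re).mem_nhds (by simp)
    exact Filter.eventuallyEq_of_mem hmem fun w hw ↦ mellin_fchi_of_one_lt χ hw
  exact (hd1.analyticOnNhd hUo).eqOn_of_preconnected_of_eventuallyEq
    (hd2.analyticOnNhd hUo) hUc h2U hev hz

end StmtAux3

namespace StmtAux4

open StmtAux StmtAux2 StmtAux3

variable {q : ℕ} [NeZero q]

/-- Integrability of `v ^ (s-1) / (v+1)` on `(0,∞)` for `0 < s < 1`. -/
lemma integrableOn_rpow_div {s : ℝ} (hs0 : 0 < s) (hs1 : s < 1) :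
    IntegrableOn (fun v : ℝ ↦ v ^ (s - 1) * (v + 1)⁻¹) (Ioi 0) := by
  have hmeas : ∀ (T : Set ℝ), MeasurableSet T → T ⊆ Ioi 0 →
      AEStronglyMeasurable (fun v : ℝ ↦ v ^ (s - 1) * (v + 1)⁻¹) (volume.restrict T) := by
    intro T hT hTsub
    refine ContinuousOn.aestronglyMeasurable ?_ hT
    refine ContinuousOn.mul ?_ ?_
    · intro v hv
      exact (Real.continuousAt_rpow_const v _ (Or.inl (ne_of_gt (hTsub hv)))).continuousWithinAt
    · refine ContinuousOn.inv₀ (by fun_prop) ?_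
      intro v hv
      have := hTsub hv
      simp only [mem_Ioi] at this
      positivity
  have h1 : IntegrableOn (fun v : ℝ ↦ v ^ (s - 1) * (v + 1)⁻¹) (Ioc 0 1) := by
    have hint : IntegrableOn (fun v : ℝ ↦ v ^ (s - 1)) (Ioc 0 1) := by
      have := intervalIntegral.intervalIntegrable_rpow' (a := 0) (b := 1) (by linarith : (-1:ℝ) < s - 1)
      rwa [intervalIntegrable_iff_integrableOn_Ioc_of_le zero_le_one] at this
    refine Integrable.mono' hint (hmeas _ measurableSet_Ioc Ioc_subset_Ioi_self) ?_
    filter_upwards [ae_restrict_mem measurableSet_Ioc] with v hv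
    have hv0 : 0 < v := hv.1
    rw [Real.norm_eq_abs, abs_mul, abs_of_pos (Real.rpow_pos_of_pos hv0 _),
      abs_of_pos (by positivity : (0:ℝ) < (v+1)⁻¹)]
    calc v ^ (s - 1) * (v + 1)⁻¹ ≤ v ^ (s - 1) * 1 := by
          gcongr
          rw [inv_le_one_iff₀]; right; linarith
      _ = v ^ (s - 1) := mul_one _
  have h2 : IntegrableOn (fun v : ℝ ↦ v ^ (s - 1) * (v + 1)⁻¹) (Ioi 1) := by
    have hint : IntegrableOn (fun v : ℝ ↦ v ^ (s - 2)) (Ioi 1) :=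
      integrableOn_Ioi_rpow_of_lt (by linarith) one_pos
    refine Integrable.mono' hint (hmeas _ measurableSet_Ioi
      (Ioi_subset_Ioi zero_le_one)) ?_
    filter_upwards [ae_restrict_mem measurableSet_Ioi] with v hv
    have hv1 : (1:ℝ) < v := hv
    have hv0 : 0 < v := by linarith
    rw [Real.norm_eq_abs, abs_mul, abs_of_pos (Real.rpow_pos_of_pos hv0 _),
      abs_of_pos (by positivity : (0:ℝ) < (v+1)⁻¹)]
    calc v ^ (s - 1) * (v + 1)⁻¹ ≤ v ^ (s - 1) * v⁻¹ := by
          have h := Real.rpow_nonneg hv0.le (s - 1)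
          have h2 : v⁻¹ ≤ v⁻¹ := le_refl _
          have h3 : (v + 1)⁻¹ ≤ v⁻¹ := by
            apply inv_anti₀ hv0
            linarith
          exact mul_le_mul_of_nonneg_left h3 h
      _ = v ^ (s - 2) := by
          rw [← Real.rpow_neg_one v, ← Real.rpow_add hv0]
          ring_nf
  have := h1.union h2
  rwa [Ioc_union_Ioi_eq_Ioi zero_le_one] at this

lemma exp_prod_eq (v x : ℝ) : rexp (-(x * v)) * rexp (-x) = rexp (-((v + 1) * x)) := by
  rw [← Real.exp_add]; ring_nf

end StmtAux4

namespace StmtAux5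

open StmtAux StmtAux2 StmtAux3 StmtAux4

variable {q : ℕ} [NeZero q]

lemma aesm_G (χ : DirichletCharacter ℂ q) (s : ℝ) :
    AEStronglyMeasurable (Function.uncurry (fun v x : ℝ ↦
      fchi χ (x * v) * fchi (χ.ringHomComp (starRingEnd ℂ)) x * (v:ℂ) ^ ((s:ℂ) - 1)))
      ((volume.restrict (Ioi (0:ℝ))).prod (volume.restrict (Ioi (0:ℝ)))) := by
  rw [Measure.prod_restrict]
  refine ContinuousOn.aestronglyMeasurable ?_ (measurableSet_Ioi.prod measurableSet_Ioi)
  have h1 : ContinuousOn (fun p : ℝ × ℝ ↦ fchi χ (p.2 * p.1)) (Ioi 0 ×ˢ Ioi 0) := by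
    refine (continuousOn_fchi χ).comp ((continuous_snd.mul continuous_fst).continuousOn) ?_
    intro p hp
    exact mem_Ioi.mpr (mul_pos (mem_Ioi.mp hp.2) (mem_Ioi.mp hp.1))
  have h2 : ContinuousOn (fun p : ℝ × ℝ ↦ fchi (χ.ringHomComp (starRingEnd ℂ)) p.2)
      (Ioi 0 ×ˢ Ioi 0) := by
    refine (continuousOn_fchi _).comp continuous_snd.continuousOn ?_
    intro p hp
    exact hp.2
  have h3 : ContinuousOn (fun p : ℝ × ℝ ↦ ((p.1 : ℝ) : ℂ) ^ ((s:ℂ) - 1))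
      (Ioi 0 ×ˢ Ioi 0) := by
    intro p hp
    exact ((Complex.continuousAt_ofReal_cpow_const p.1 _
      (Or.inr (ne_of_gt (mem_Ioi.mp hp.1)))).comp continuousAt_fst).continuousWithinAt
  exact (h1.mul h2).mul h3

lemma aesm_g (q' : ℕ) (s : ℝ) :
    AEStronglyMeasurable (Function.uncurry (fun v x : ℝ ↦
      (q':ℝ)^2 * v ^ (s - 1) * rexp (-(v + 1) * x)))
      ((volume.restrict (Ioi (0:ℝ))).prod (volume.restrict (Ioi (0:ℝ)))) := by
  rw [Measure.prod_restrict]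
  refine ContinuousOn.aestronglyMeasurable ?_ (measurableSet_Ioi.prod measurableSet_Ioi)
  refine ContinuousOn.mul (ContinuousOn.mul continuousOn_const ?_) (by fun_prop)
  intro p hp
  exact ((Real.continuousAt_rpow_const p.1 _
    (Or.inl (ne_of_gt (mem_Ioi.mp hp.1)))).comp continuousAt_fst).continuousWithinAt

lemma integrable_g {s : ℝ} (hs0 : 0 < s) (hs1 : s < 1) (q' : ℕ) :
    Integrable (Function.uncurry (fun v x : ℝ ↦
      (q':ℝ)^2 * v ^ (s - 1) * rexp (-(v + 1) * x)))
      ((volume.restrict (Ioi (0:ℝ))).prod (volume.restrict (Ioi (0:ℝ)))) := by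
  rw [MeasureTheory.integrable_prod_iff (aesm_g q' s)]
  constructor
  · filter_upwards [ae_restrict_mem measurableSet_Ioi] with v hv
    have hv0 : (0:ℝ) < v := hv
    have h2 : Integrable (fun x : ℝ ↦ ((q':ℝ)^2 * v ^ (s - 1)) * rexp (-(v + 1) * x))
        (volume.restrict (Ioi 0)) :=
      (exp_neg_integrableOn_Ioi 0 (by linarith : (0:ℝ) < v + 1)).const_mul _
    simpa [Function.uncurry] using h2
  · have hH : Integrable (fun v : ℝ ↦ (q':ℝ)^2 * (v ^ (s - 1) * (v + 1)⁻¹))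
        (volume.restrict (Ioi (0:ℝ))) :=
      (integrableOn_rpow_div hs0 hs1).const_mul _
    refine hH.congr ?_
    filter_upwards [ae_restrict_mem measurableSet_Ioi] with v hv
    have hv0 : (0:ℝ) < v := hv
    have hv1 : (0:ℝ) < v + 1 := by linarith
    have hexp : ∫ x in Ioi (0:ℝ), rexp (-(v + 1) * x) = (v + 1)⁻¹ := by
      have h := Real.integral_rpow_mul_exp_neg_mul_Ioi one_pos hv1
      simp only [sub_self, Real.rpow_zero, one_mul, Real.rpow_one, Real.Gamma_one,
        mul_one, one_div] at h
      rw [← h]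
      exact setIntegral_congr_fun measurableSet_Ioi fun x hx ↦ by rw [neg_mul]
    have hnorm : ∀ x ∈ Ioi (0:ℝ),
        ‖(q':ℝ)^2 * v ^ (s - 1) * rexp (-(v + 1) * x)‖
          = (q':ℝ)^2 * v ^ (s - 1) * rexp (-(v + 1) * x) := by
      intro x hx
      rw [Real.norm_eq_abs, _root_.abs_of_nonneg]
      have := Real.rpow_pos_of_pos hv0 (s - 1)
      positivity
    calc ((q':ℝ)^2 * (v ^ (s - 1) * (v + 1)⁻¹))
        = (q':ℝ)^2 * v ^ (s - 1) * ∫ x in Ioi (0:ℝ), rexp (-(v + 1) * x) := by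
          rw [hexp]; ring
      _ = ∫ x in Ioi (0:ℝ), (q':ℝ)^2 * v ^ (s - 1) * rexp (-(v + 1) * x) := by
          rw [← integral_const_mul]
      _ = ∫ x in Ioi (0:ℝ), ‖(q':ℝ)^2 * v ^ (s - 1) * rexp (-(v + 1) * x)‖ := by
          exact (setIntegral_congr_fun measurableSet_Ioi hnorm).symm
      _ = ∫ x, ‖Function.uncurry (fun v x : ℝ ↦
            (q':ℝ)^2 * v ^ (s - 1) * rexp (-(v + 1) * x)) (v, x)‖
              ∂(volume.restrict (Ioi (0:ℝ))) := rfl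

lemma norm_G_le (χ : DirichletCharacter ℂ q) (hχ : χ ≠ 1)
    (hχ' : χ.ringHomComp (starRingEnd ℂ) ≠ 1) (s : ℝ) {v x : ℝ} (hv : 0 < v) (hx : 0 < x) :
    ‖fchi χ (x * v) * fchi (χ.ringHomComp (starRingEnd ℂ)) x * (v:ℂ) ^ ((s:ℂ) - 1)‖
      ≤ (q:ℝ)^2 * v ^ (s - 1) * rexp (-(v + 1) * x) := by
  have hre : ((s:ℂ) - 1).re = s - 1 := by
    rw [Complex.sub_re, Complex.ofReal_re, Complex.one_re]
  have hnc : ‖(v:ℂ) ^ ((s:ℂ) - 1)‖ = v ^ (s - 1) := by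
    rw [Complex.norm_cpow_eq_rpow_re_of_pos hv, hre]
  rw [norm_mul, norm_mul, hnc]
  have hb1 : ‖fchi χ (x * v)‖ ≤ (q:ℝ) * rexp (-(x * v)) :=
    norm_fchi_le χ hχ (mul_pos hx hv)
  have hb2 : ‖fchi (χ.ringHomComp (starRingEnd ℂ)) x‖ ≤ (q:ℝ) * rexp (-x) :=
    norm_fchi_le _ hχ' hx
  calc ‖fchi χ (x * v)‖ * ‖fchi (χ.ringHomComp (starRingEnd ℂ)) x‖ * v ^ (s - 1)
      ≤ ((q:ℝ) * rexp (-(x * v))) * ((q:ℝ) * rexp (-x)) * v ^ (s - 1) := by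
        have hvp : (0:ℝ) ≤ v ^ (s - 1) := (Real.rpow_pos_of_pos hv _).le
        exact mul_le_mul (mul_le_mul hb1 hb2 (norm_nonneg _) (by positivity))
          (le_refl _) hvp (by positivity)
    _ = (q:ℝ)^2 * v ^ (s - 1) * rexp (-(v + 1) * x) := by
        have h := exp_prod_eq v x
        rw [show (-(v + 1) * x : ℝ) = -((v + 1) * x) by ring, ← h]
        ring

end StmtAux5


open StmtAux StmtAux2 StmtAux3 StmtAux4 StmtAux5 in
theorem stmt_14 (q : ℕ) [NeZero q] (χ : DirichletCharacter ℂ q) (hχ : χ ≠ 1)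
    (s : ℝ) (hs0 : 0 < s) (hs1 : s < 1) :
    ∫ v in Set.Ioi (0 : ℝ), Achi χ v * (v : ℂ) ^ ((s : ℂ) - 1) =
      Complex.Gamma s * DirichletCharacter.LFunction χ s *
        Complex.Gamma (1 - s) *
          DirichletCharacter.LFunction (χ.ringHomComp (starRingEnd ℂ)) (1 - s) := by
  have hχ' : χ.ringHomComp (starRingEnd ℂ) ≠ 1 :=
    (MulChar.ringHomComp_ne_one_iff (RingHom.injective _)).mpr hχ
  have hsre : 0 < ((s:ℂ)).re := by rwa [Complex.ofReal_re]
  have hs1re : 0 < ((1:ℂ) - (s:ℂ)).re := by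
    rw [Complex.sub_re, Complex.one_re, Complex.ofReal_re]; linarith
  set G : ℝ → ℝ → ℂ := fun v x ↦
    fchi χ (x * v) * fchi (χ.ringHomComp (starRingEnd ℂ)) x * (v:ℂ) ^ ((s:ℂ) - 1) with hGdef
  have hGint : Integrable (Function.uncurry G)
      ((volume.restrict (Ioi (0:ℝ))).prod (volume.restrict (Ioi (0:ℝ)))) := by
    refine Integrable.mono' (integrable_g hs0 hs1 q) (aesm_G χ s) ?_
    rw [Measure.prod_restrict]
    filter_upwards [ae_restrict_mem (measurableSet_Ioi.prod measurableSet_Ioi)] with p hp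
    exact norm_G_le χ hχ hχ' s (mem_Ioi.mp hp.1) (mem_Ioi.mp hp.2)
  have step1 : (∫ v in Ioi (0:ℝ), Achi χ v * (v:ℂ) ^ ((s:ℂ) - 1))
      = ∫ v in Ioi (0:ℝ), ∫ x in Ioi (0:ℝ), G v x := by
    refine setIntegral_congr_fun measurableSet_Ioi fun v hv ↦ ?_
    rw [Achi, ← integral_mul_const]
  have step2 : (∫ v in Ioi (0:ℝ), ∫ x in Ioi (0:ℝ), G v x)
      = ∫ x in Ioi (0:ℝ), ∫ v in Ioi (0:ℝ), G v x :=
    integral_integral_swap hGint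
  have hmell : ∀ x ∈ Ioi (0:ℝ), (∫ v in Ioi (0:ℝ), G v x)
      = mellin (fchi χ) s * ((x:ℂ) ^ (-(s:ℂ)) *
          fchi (χ.ringHomComp (starRingEnd ℂ)) x) := by
    intro x hx
    have hx0 : (0:ℝ) < x := hx
    have h1 : (∫ v in Ioi (0:ℝ), G v x)
        = (∫ v in Ioi (0:ℝ), (v:ℂ) ^ ((s:ℂ) - 1) • fchi χ (x * v)) *
            fchi (χ.ringHomComp (starRingEnd ℂ)) x := by
      rw [← integral_mul_const]
      refine setIntegral_congr_fun measurableSet_Ioi fun v hv ↦ ?_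
      simp only [hGdef, smul_eq_mul]
      ring
    have h2 : (∫ v in Ioi (0:ℝ), (v:ℂ) ^ ((s:ℂ) - 1) • fchi χ (x * v))
        = mellin (fun t ↦ fchi χ (x * t)) s := rfl
    rw [h1, h2, mellin_comp_mul_left (fchi χ) (s:ℂ) hx0]
    simp only [smul_eq_mul]
    ring
  have step3 : (∫ x in Ioi (0:ℝ), ∫ v in Ioi (0:ℝ), G v x)
      = mellin (fchi χ) s * ∫ x in Ioi (0:ℝ),
          (x:ℂ) ^ (-(s:ℂ)) * fchi (χ.ringHomComp (starRingEnd ℂ)) x := by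
    rw [← integral_const_mul]
    exact setIntegral_congr_fun measurableSet_Ioi hmell
  have hM' : (∫ x in Ioi (0:ℝ), (x:ℂ) ^ (-(s:ℂ)) *
        fchi (χ.ringHomComp (starRingEnd ℂ)) x)
      = mellin (fchi (χ.ringHomComp (starRingEnd ℂ))) (1 - (s:ℂ)) := by
    rw [mellin]
    refine setIntegral_congr_fun measurableSet_Ioi fun x hx ↦ ?_
    rw [smul_eq_mul]
    congr 1
    ring_nf
  rw [step1, step2, step3, hM', mellin_fchi χ hχ hsre,
    mellin_fchi _ hχ' hs1re]
  ring
end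

section
/- For α ∈ (0,1), as ε → 0^+ one has ∑_{m=0}^∞ e^{-(m+α)ε}/(m+α) + log ε → −γ − Γ'(α)/Γ(α), where γ is the Euler–Mascheroni constant and Γ'/Γ is the digamma function. -/
open Real Filter Topology Set Finset

local notation "γ" => Real.eulerMascheroniConstant

-- digamma series
lemma digamma_hasSum (α : ℝ) (hα0 : 0 < α) (hα1 : α < 1) :
    HasSum (fun m : ℕ => 1 / ((m : ℝ) + α) - 1 / ((m : ℝ) + 1))
      (-γ - deriv Real.Gamma α / Real.Gamma α) := by
  set f : ℝ → ℝ := Real.log ∘ Real.Gamma with hf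
  have hc : ConvexOn ℝ (Ioi 0) f := Real.convexOn_log_Gamma
  have h_rec (x : ℝ) (hx : 0 < x) : f (x + 1) = f x + Real.log x := by
    simp only [f, Function.comp_apply, Real.Gamma_add_one hx.ne',
      Real.log_mul hx.ne' (Real.Gamma_pos_of_pos hx).ne', add_comm]
  have hder {x : ℝ} (hx : 0 < x) : DifferentiableAt ℝ f x := by
    refine ((Real.differentiableAt_Gamma ?_).log (Real.Gamma_ne_zero ?_)) <;>
    exact fun m ↦ ((neg_nonpos.mpr (Nat.cast_nonneg m)).trans_lt hx).ne'
  have hder_rec (x : ℝ) (hx : 0 < x) : deriv f (x + 1) = deriv f x + 1 / x := by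
    rw [← deriv_comp_add_const, one_div, ← Real.deriv_log,
      ← deriv_add (hder <| by positivity) (Real.differentiableAt_log hx.ne')]
    apply Filter.EventuallyEq.deriv_eq
    filter_upwards [eventually_gt_nhds hx] using h_rec
  have hder_nat (n : ℕ) :
      deriv f (α + n) = deriv f α + ∑ k ∈ range n, 1 / (α + k) := by
    induction n with
    | zero => simp
    | succ n ih =>
      have : α + (n + 1 : ℕ) = (α + n) + 1 := by push_cast; ring
      rw [this, hder_rec (α + n) (by positivity), ih, sum_range_succ]
      ring
  -- sandwich
  have hub (x : ℝ) (hx : 0 < x) : deriv f x ≤ Real.log x := by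
    have := hc.deriv_le_slope (mem_Ioi.mpr hx) (mem_Ioi.mpr (by linarith : (0:ℝ) < x + 1))
      (by linarith) (hder hx)
    rwa [slope_def_field, h_rec x hx, add_sub_cancel_left,
      show x + 1 - x = (1:ℝ) by ring, div_one] at this
  have hlb (x : ℝ) (hx : 0 < x) : Real.log x ≤ deriv f (x + 1) := by
    have := hc.slope_le_deriv (mem_Ioi.mpr hx) (mem_Ioi.mpr (by linarith : (0:ℝ) < x + 1))
      (by linarith) (hder (by linarith))
    rwa [slope_def_field, h_rec x hx, add_sub_cancel_left,
      show x + 1 - x = (1:ℝ) by ring, div_one] at this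
  -- log (n + c) - log n → 0
  have key : ∀ c : ℝ, Tendsto (fun n : ℕ => Real.log ((n : ℝ) + c) - Real.log n)
      atTop (𝓝 0) := by
    intro c
    have h1 : Tendsto (fun n : ℕ => 1 + c / (n : ℝ)) atTop (𝓝 1) := by
      simpa using tendsto_const_nhds.add (tendsto_const_div_atTop_nhds_zero_nat c)
    have h2 : Tendsto (fun n : ℕ => Real.log (1 + c / (n : ℝ))) atTop (𝓝 0) := by
      simpa [Function.comp_def] using (Real.continuousAt_log one_ne_zero).tendsto.comp h1
    apply h2.congr'
    filter_upwards [eventually_gt_atTop (max 1 (Nat.ceil |c|))] with n hn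
    have hn1 : (1 : ℝ) ≤ (n : ℝ) := by
      have : (1:ℕ) ≤ n := le_of_lt (lt_of_le_of_lt (le_max_left _ _) hn)
      exact_mod_cast this
    have h3 : (Nat.ceil |c| : ℝ) + 1 ≤ (n : ℝ) := by
      have : Nat.ceil |c| + 1 ≤ n := Nat.succ_le_of_lt (lt_of_le_of_lt (le_max_right _ _) hn)
      exact_mod_cast this
    have hnc : 0 < (n : ℝ) + c := by
      have h4 := Nat.le_ceil |c|
      have h5 := neg_abs_le c
      linarith
    rw [show 1 + c / (n:ℝ) = ((n:ℝ) + c) / n by field_simp,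
      Real.log_div hnc.ne' (by linarith)]
  -- deriv f (α + n) - log n → 0
  have hmid : Tendsto (fun n : ℕ => deriv f (α + n) - Real.log n) atTop (𝓝 0) := by
    apply tendsto_of_tendsto_of_tendsto_of_le_of_le' (key (α - 1)) (key α)
    · filter_upwards [eventually_ge_atTop 1] with n hn
      have hx : 0 < (n : ℝ) + α - 1 := by
        have : (1:ℝ) ≤ (n:ℝ) := by exact_mod_cast hn
        linarith
      have := hlb ((n : ℝ) + α - 1) hx
      have e : (n : ℝ) + α - 1 + 1 = α + n := by ring
      rw [e] at this
      have e2 : (n:ℝ) + (α - 1) = (n:ℝ) + α - 1 := by ring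
      rw [e2]
      linarith
    · filter_upwards with n
      have h := hub (α + n) (by positivity)
      have e : (n:ℝ) + α = α + (n:ℝ) := by ring
      rw [e]
      linarith
  -- partial sums tendsto
  have hhar : Tendsto (fun n : ℕ => ((harmonic n : ℝ) - Real.log n)) atTop (𝓝 γ) :=
    Real.tendsto_harmonic_sub_log
  have hS : Tendsto (fun n : ℕ => ∑ k ∈ range n, (1 / (α + (k:ℝ)) - 1 / ((k:ℝ) + 1)))
      atTop (𝓝 (-γ - deriv f α)) := by
    have heq : ∀ n : ℕ, ∑ k ∈ range n, (1 / (α + (k:ℝ)) - 1 / ((k:ℝ) + 1))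
        = (deriv f (α + n) - Real.log n) - ((harmonic n : ℝ) - Real.log n) - deriv f α := by
      intro n
      rw [sum_sub_distrib]
      have h1 : ∑ k ∈ range n, 1 / (α + (k:ℝ)) = deriv f (α + n) - deriv f α := by
        rw [hder_nat n]; ring
      have h2 : ∑ k ∈ range n, (1 / ((k:ℝ) + 1)) = (harmonic n : ℝ) := by
        rw [harmonic]; push_cast
        exact Finset.sum_congr rfl fun k _ => by ring
      rw [h1, h2]; ring
    simp only [heq]
    have := (hmid.sub hhar).sub (tendsto_const_nhds (x := deriv f α))
    simpa using this
  -- summability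
  have hsumm : Summable (fun m : ℕ => 1 / ((m : ℝ) + α) - 1 / ((m : ℝ) + 1)) := by
    have hb : Summable (fun m : ℕ => (1 - α) / α * (1 / ((m:ℝ) + 1) ^ 2)) := by
      apply Summable.mul_left
      have := (Real.summable_one_div_nat_pow (p := 2)).mpr one_lt_two
      exact_mod_cast (summable_nat_add_iff 1).mpr this
    apply Summable.of_nonneg_of_le _ _ hb
    · intro m
      have h1 : (0:ℝ) < (m:ℝ) + α := by positivity
      have h2 : (m:ℝ) + α ≤ (m:ℝ) + 1 := by linarith
      have := one_div_le_one_div_of_le h1 h2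
      linarith
    · intro m
      have h1 : (0:ℝ) < (m:ℝ) + α := by positivity
      have h2 : (0:ℝ) < (m:ℝ) + 1 := by positivity
      have e1 : 1 / ((m:ℝ) + α) - 1 / ((m:ℝ) + 1) = (1 - α) / (((m:ℝ) + α) * ((m:ℝ) + 1)) := by
        field_simp
        ring
      have e2 : (1 - α) / α * (1 / ((m:ℝ) + 1) ^ 2) = (1 - α) / (α * ((m:ℝ) + 1) ^ 2) := by
        field_simp
      rw [e1, e2]
      apply div_le_div_of_nonneg_left (by linarith) (by positivity)
      nlinarith [mul_nonneg (mul_nonneg (by positivity : (0:ℝ) ≤ (m:ℝ) + 1)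
        (Nat.cast_nonneg m : (0:ℝ) ≤ (m:ℝ))) (by linarith : (0:ℝ) ≤ 1 - α)]
  have hψ : deriv f α = deriv Real.Gamma α / Real.Gamma α := by
    rw [hf, Function.comp_def]
    exact deriv.log (Real.differentiableAt_Gamma fun m =>
      ((neg_nonpos.mpr (Nat.cast_nonneg m)).trans_lt hα0).ne')
      (Real.Gamma_pos_of_pos hα0).ne'
  rw [← hψ]
  refine (hsumm.hasSum_iff_tendsto_nat).mpr ?_
  exact hS.congr fun n => Finset.sum_congr rfl fun k _ => by rw [add_comm (k:ℝ) α]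

lemma summable_exp_div (α : ℝ) (hα0 : 0 < α) {ε : ℝ} (hε : 0 < ε) :
    Summable (fun m : ℕ => Real.exp (-((m : ℝ) + α) * ε) / ((m : ℝ) + α)) := by
  have hg : Summable (fun m : ℕ => Real.exp (-ε) ^ m * (1 / α)) :=
    (summable_geometric_of_lt_one (Real.exp_pos _).le
      (Real.exp_lt_one_iff.mpr (by linarith))).mul_right _
  apply Summable.of_nonneg_of_le (fun m => by positivity) _ hg
  intro m
  have h1 : Real.exp (-((m : ℝ) + α) * ε) ≤ Real.exp (-ε) ^ m := by
    rw [← Real.exp_nat_mul]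
    apply Real.exp_le_exp.mpr
    nlinarith [Nat.cast_nonneg (α := ℝ) m]
  rw [mul_one_div]
  exact div_le_div₀ (by positivity) h1 hα0 (by simp [Nat.cast_nonneg])

lemma hasSum_exp_one {ε : ℝ} (hε : 0 < ε) :
    HasSum (fun m : ℕ => Real.exp (-((m : ℝ) + 1) * ε) / ((m : ℝ) + 1))
      (-Real.log (1 - Real.exp (-ε))) := by
  have h := hasSum_pow_div_log_of_abs_lt_one (x := Real.exp (-ε))
    (by rw [abs_of_pos (Real.exp_pos _)]; exact Real.exp_lt_one_iff.mpr (by linarith))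
  refine HasSum.congr_fun h fun m => ?_
  rw [← Real.exp_nat_mul]
  congr 2
  push_cast
  ring

lemma eps_exp_le (m : ℕ) {ε : ℝ} (h0 : 0 < ε) (h1 : ε ≤ 1) :
    ε * Real.exp (-(m : ℝ) * ε) ≤ 2 / ((m : ℝ) + 1) := by
  rcases Nat.eq_zero_or_pos m with rfl | hm
  · simp only [Nat.cast_zero, neg_zero, zero_mul, Real.exp_zero, mul_one]
    norm_num
    linarith
  have hm1 : (1 : ℝ) ≤ (m : ℝ) := by exact_mod_cast hm
  have hx : (0:ℝ) < (m : ℝ) * ε := by positivity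
  have key : (m : ℝ) * ε * Real.exp (-((m:ℝ) * ε)) ≤ 1 := by
    rw [Real.exp_neg, mul_inv_le_iff₀ (Real.exp_pos _)]
    linarith [Real.add_one_le_exp ((m:ℝ) * ε)]
  have h2 : ε * Real.exp (-(m : ℝ) * ε) ≤ 1 / (m : ℝ) := by
    rw [le_div_iff₀ (by positivity : (0:ℝ) < (m:ℝ))]
    have e : ε * Real.exp (-(m:ℝ) * ε) * m = (m:ℝ) * ε * Real.exp (-((m:ℝ) * ε)) := by
      rw [neg_mul]; ring
    rw [e]; exact key
  refine h2.trans ?_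
  rw [div_le_div_iff₀ (by positivity) (by positivity)]
  linarith


theorem stmt_16 (α : ℝ) (hα0 : 0 < α) (hα1 : α < 1) :
    Tendsto
      (fun ε : ℝ => (∑' m : ℕ, Real.exp (-((m : ℝ) + α) * ε) / ((m : ℝ) + α)) + Real.log ε)
      (nhdsWithin 0 (Set.Ioi 0))
      (nhds (-Real.eulerMascheroniConstant - deriv Real.Gamma α / Real.Gamma α)) := by
  have hsum0 := digamma_hasSum α hα0 hα1
  set L : ℕ → ℝ := fun m => 1 / ((m : ℝ) + α) - 1 / ((m : ℝ) + 1) with hL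
  set F : ℝ → ℕ → ℝ := fun ε m =>
    Real.exp (-((m : ℝ) + α) * ε) / ((m : ℝ) + α)
      - Real.exp (-((m : ℝ) + 1) * ε) / ((m : ℝ) + 1) with hF
  -- Step C : log ε - log (1 - exp (-ε)) → 0
  have hC : Tendsto (fun ε : ℝ => Real.log ε - Real.log (1 - Real.exp (-ε)))
      (nhdsWithin 0 (Set.Ioi 0)) (𝓝 0) := by
    have hd : HasDerivAt (fun x : ℝ => 1 - Real.exp (-x)) 1 0 := by
      have h1 : HasDerivAt (fun x : ℝ => Real.exp (-x)) (-1) 0 := by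
        simpa [Function.comp_def] using (Real.hasDerivAt_exp (-0)).comp 0 (hasDerivAt_neg 0)
      simpa using h1.const_sub 1
    have h2 : Tendsto (fun ε : ℝ => (1 - Real.exp (-ε)) / ε)
        (nhdsWithin 0 (Set.Ioi 0)) (𝓝 1) := by
      have h := (hasDerivAt_iff_tendsto_slope.mp hd).mono_left
        (nhdsWithin_mono 0 (fun x (hx : x ∈ Set.Ioi 0) => ne_of_gt hx))
      refine h.congr fun x => ?_
      rw [slope_def_field]
      simp
    have h3 : Tendsto (fun ε : ℝ => Real.log ((1 - Real.exp (-ε)) / ε))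
        (nhdsWithin 0 (Set.Ioi 0)) (𝓝 0) := by
      simpa [Function.comp_def] using (Real.continuousAt_log one_ne_zero).tendsto.comp h2
    have h4 := h3.neg
    rw [neg_zero] at h4
    apply h4.congr'
    filter_upwards [self_mem_nhdsWithin] with ε (hε : 0 < ε)
    have hlt : Real.exp (-ε) < 1 := Real.exp_lt_one_iff.mpr (by linarith)
    rw [Real.log_div (by linarith) hε.ne']
    ring
  -- Step B : dominated convergence
  have hB : Tendsto (fun ε : ℝ => ∑' m : ℕ, F ε m)
      (nhdsWithin 0 (Set.Ioi 0)) (𝓝 (∑' m, L m)) := by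
    apply tendsto_tsum_of_dominated_convergence
      (bound := fun m : ℕ => (1 / ((m:ℝ) + α) - 1 / ((m:ℝ) + 1))
        + 2 * (1 - α) * (1 / ((m:ℝ) + 1) ^ 2))
    · refine hsum0.summable.add (Summable.mul_left _ ?_)
      have := (Real.summable_one_div_nat_pow (p := 2)).mpr one_lt_two
      exact_mod_cast (summable_nat_add_iff 1).mpr this
    · intro m
      have hcont : Continuous (fun ε : ℝ =>
          Real.exp (-((m : ℝ) + α) * ε) / ((m : ℝ) + α)
            - Real.exp (-((m : ℝ) + 1) * ε) / ((m : ℝ) + 1)) := by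
        fun_prop
      have := (hcont.tendsto 0).mono_left (nhdsWithin_le_nhds (s := Set.Ioi (0:ℝ)))
      simpa [hF, hL, mul_zero, Real.exp_zero] using this
    · filter_upwards [Ioo_mem_nhdsGT_of_mem
        (show (0:ℝ) ∈ Set.Ico 0 1 by norm_num)] with ε hε m
      obtain ⟨hε0, hε1⟩ := hε
      have hm0 : (0:ℝ) < (m:ℝ) + α := by positivity
      have hm1 : (0:ℝ) < (m:ℝ) + 1 := by positivity
      set a := Real.exp (-((m : ℝ) + α) * ε) with ha
      set b := Real.exp (-((m : ℝ) + 1) * ε) with hb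
      have ha1 : a ≤ 1 := Real.exp_le_one_iff.mpr (by nlinarith [Nat.cast_nonneg (α := ℝ) m])
      have hb0 : (0:ℝ) < b := Real.exp_pos _
      have hba : b ≤ a := Real.exp_le_exp.mpr (by nlinarith [Nat.cast_nonneg (α := ℝ) m])
      -- a - b ≤ (1 - α) * (ε * exp (-m ε))
      have hdiff : a - b ≤ (1 - α) * (ε * Real.exp (-(m:ℝ) * ε)) := by
        have e1 : a = Real.exp (-(m:ℝ) * ε) * Real.exp (-(α * ε)) := by
          rw [ha, ← Real.exp_add]; ring_nf
        have e2 : b = Real.exp (-(m:ℝ) * ε) * Real.exp (-(α * ε)) * Real.exp (-((1-α) * ε)) := by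
          rw [hb, ← Real.exp_add, ← Real.exp_add]; ring_nf
        have h5 : 1 - Real.exp (-((1-α) * ε)) ≤ (1-α) * ε := by
          linarith [Real.add_one_le_exp (-((1-α) * ε))]
        have h6 : Real.exp (-(α * ε)) ≤ 1 := Real.exp_le_one_iff.mpr (by nlinarith)
        have h7 : (0:ℝ) ≤ 1 - Real.exp (-((1-α) * ε)) := by
          have : Real.exp (-((1-α) * ε)) ≤ 1 := Real.exp_le_one_iff.mpr (by nlinarith)
          linarith
        have h8 : (0:ℝ) < Real.exp (-(m:ℝ) * ε) := Real.exp_pos _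
        have h9 : Real.exp (-(m:ℝ) * ε) ≤ 1 := Real.exp_le_one_iff.mpr (by
          nlinarith [Nat.cast_nonneg (α := ℝ) m])
        calc a - b = Real.exp (-(m:ℝ) * ε) * (Real.exp (-(α * ε))
              * (1 - Real.exp (-((1-α) * ε)))) := by rw [e1, e2]; ring
        _ ≤ Real.exp (-(m:ℝ) * ε) * (1 * ((1-α) * ε)) := by
            exact mul_le_mul_of_nonneg_left (mul_le_mul h6 h5 h7 one_pos.le) h8.le
        _ = (1 - α) * (ε * Real.exp (-(m:ℝ) * ε)) := by ring
      have hkey3 : ε * Real.exp (-(m:ℝ) * ε) ≤ 2 / ((m:ℝ) + 1) := eps_exp_le m hε0 hε1.le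
      have hdiff2 : a - b ≤ (1 - α) * (2 / ((m:ℝ) + 1)) :=
        hdiff.trans (mul_le_mul_of_nonneg_left hkey3 (by linarith))
      have hFe : F ε m = a / ((m:ℝ) + α) - b / ((m:ℝ) + 1) := rfl
      have hFnonneg : 0 ≤ F ε m := by
        rw [hFe]
        have := div_le_div₀ (by positivity : (0:ℝ) ≤ a) hba hm0
          (by linarith : (m:ℝ) + α ≤ (m:ℝ) + 1)
        linarith
      rw [Real.norm_eq_abs, abs_of_nonneg hFnonneg, hFe]
      have heq : a / ((m:ℝ) + α) - b / ((m:ℝ) + 1)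
          = a * ((1 - α) / (((m:ℝ) + α) * ((m:ℝ) + 1))) + (a - b) / ((m:ℝ) + 1) := by
        field_simp
        ring
      calc a / ((m:ℝ) + α) - b / ((m:ℝ) + 1)
          = a * ((1 - α) / (((m:ℝ) + α) * ((m:ℝ) + 1))) + (a - b) / ((m:ℝ) + 1) := heq
        _ ≤ 1 * ((1 - α) / (((m:ℝ) + α) * ((m:ℝ) + 1)))
            + ((1 - α) * (2 / ((m:ℝ) + 1))) / ((m:ℝ) + 1) := by
            refine add_le_add (mul_le_mul_of_nonneg_right ha1 (div_nonneg (by linarith) (by positivity))) ?_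
            exact (div_le_div_iff_of_pos_right hm1).mpr hdiff2
        _ = (1 / ((m:ℝ) + α) - 1 / ((m:ℝ) + 1)) + 2 * (1 - α) * (1 / ((m:ℝ) + 1) ^ 2) := by
            field_simp
            ring
  -- Step A : splitting the sum
  have hA : ∀ ε : ℝ, 0 < ε →
      (∑' m : ℕ, Real.exp (-((m : ℝ) + α) * ε) / ((m : ℝ) + α)) + Real.log ε
      = (∑' m, F ε m) + (Real.log ε - Real.log (1 - Real.exp (-ε))) := by
    intro ε hε
    have h1 := summable_exp_div α hα0 hε
    have h2 := hasSum_exp_one hε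
    rw [hF]
    rw [Summable.tsum_sub h1 h2.summable, h2.tsum_eq]
    ring
  have hfinal := hB.add hC
  rw [add_zero, hsum0.tsum_eq] at hfinal
  apply hfinal.congr'
  filter_upwards [self_mem_nhdsWithin] with ε (hε : 0 < ε)
  exact (hA ε hε).symm
end
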